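/- arXiv:1106.1232 — 2 statements merged into one kernel-verified Lean document; each statement's English description precedes it below -/
import Mathlib

section
/- The system of equations val(v_win) = 1, val(v_lose) = 0, val(v) = max over successors for Eve's vertices, val(v) = min over successors for Adam's vertices, and val(v) = (1/2)·(val(v') + val(v'')) for random vertices with two successors, has at most one solution in [0,1]^V for a stopping simple stochastic game. -/
/-!
Let `d = val - val'` and let Eve play a successor maximizing `val`, Adam one minimizing `val'`.
Along every move of the resulting play `d` cannot decrease at Eve's or Adam's vertices, and at a
random vertex `d` is the average of its two successors. Hence the set where `d` attains its
maximum is closed under moves. Since the game is stopping, this set contains `vwin` or `vlose`,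
where `d = 0`; so `val ≤ val'`, and symmetrically `val' ≤ val`.
-/

/-- The one-step relation induced by positional strategies `σ` (for Eve) and
`τ` (for Adam) in a simple stochastic game; from random vertices both successors
`r1 v`, `r2 v` are possible. -/
def ssgStep {V : Type*} (VE VA VR : Set V) (σ τ r1 r2 : V → V) (a b : V) : Prop :=
  (a ∈ VE ∧ b = σ a) ∨ (a ∈ VA ∧ b = τ a) ∨ (a ∈ VR ∧ (b = r1 a ∨ b = r2 a))

section MaximumPrinciple

variable {V : Type*} {VE VA VR : Set V} {σ τ r1 r2 : V → V} {d : V → ℝ} {M : ℝ}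

theorem ssgStep.apply_eq_of_apply_eq_max (hM : ∀ v, d v ≤ M)
    (hσ : ∀ a ∈ VE, d a ≤ d (σ a)) (hτ : ∀ a ∈ VA, d a ≤ d (τ a))
    (hR : ∀ a ∈ VR, d a = (d (r1 a) + d (r2 a)) / 2)
    {a b : V} (hab : ssgStep VE VA VR σ τ r1 r2 a b) (ha : d a = M) : d b = M := by
  rcases hab with ⟨haE, rfl⟩ | ⟨haA, rfl⟩ | ⟨haR, rfl | rfl⟩
  · exact le_antisymm (hM _) (ha ▸ hσ a haE)
  · exact le_antisymm (hM _) (ha ▸ hτ a haA)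
  all_goals linarith [hR a haR, hM (r1 a), hM (r2 a)]

theorem ssgStep.reflTransGen_apply_eq_of_apply_eq_max (hM : ∀ v, d v ≤ M)
    (hσ : ∀ a ∈ VE, d a ≤ d (σ a)) (hτ : ∀ a ∈ VA, d a ≤ d (τ a))
    (hR : ∀ a ∈ VR, d a = (d (r1 a) + d (r2 a)) / 2)
    {a b : V} (hab : Relation.ReflTransGen (ssgStep VE VA VR σ τ r1 r2) a b) (ha : d a = M) :
    d b = M := by
  induction hab with
  | refl => exact ha
  | tail _ hstep ih => exact ssgStep.apply_eq_of_apply_eq_max hM hσ hτ hR hstep ih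

theorem ssg_le_zero_of_absorbing_le_zero [Finite V] {vwin vlose : V}
    (hσ : ∀ a ∈ VE, d a ≤ d (σ a)) (hτ : ∀ a ∈ VA, d a ≤ d (τ a))
    (hR : ∀ a ∈ VR, d a = (d (r1 a) + d (r2 a)) / 2)
    (hreach : ∀ v, Relation.ReflTransGen (ssgStep VE VA VR σ τ r1 r2) v vwin ∨
      Relation.ReflTransGen (ssgStep VE VA VR σ τ r1 r2) v vlose)
    (hwin : d vwin ≤ 0) (hlose : d vlose ≤ 0) (v : V) : d v ≤ 0 := by
  have : Nonempty V := ⟨v⟩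
  obtain ⟨m, hm⟩ := Finite.exists_max d
  have hreach_max {w : V} (h : Relation.ReflTransGen (ssgStep VE VA VR σ τ r1 r2) m w) :
      d w = d m :=
    ssgStep.reflTransGen_apply_eq_of_apply_eq_max hm hσ hτ hR h rfl
  calc d v ≤ d m := hm v
    _ ≤ 0 := by
      rcases hreach m with h | h
      · exact hreach_max h ▸ hwin
      · exact hreach_max h ▸ hlose

end MaximumPrinciple

theorem ssg_solution_le_of_absorbing_le {V : Type*} [Finite V]
    (VE VA VR : Set V) (succ : V → Set V)
    (hsucc : ∀ v, (succ v).Nonempty) (hfin : ∀ v, (succ v).Finite)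
    (r1 r2 : V → V) {vwin vlose : V}
    (hstop : ∀ σ τ : V → V, (∀ v ∈ VE, σ v ∈ succ v) → (∀ v ∈ VA, τ v ∈ succ v) →
      ∀ v : V, Relation.ReflTransGen (ssgStep VE VA VR σ τ r1 r2) v vwin ∨
        Relation.ReflTransGen (ssgStep VE VA VR σ τ r1 r2) v vlose)
    (val val' : V → ℝ) (hwin : val vwin ≤ val' vwin) (hlose : val vlose ≤ val' vlose)
    (hE : ∀ v ∈ VE, val v = sSup (val '' succ v))
    (hA : ∀ v ∈ VA, val v = sInf (val '' succ v))
    (hR : ∀ v ∈ VR, val v = (val (r1 v) + val (r2 v)) / 2)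
    (hE' : ∀ v ∈ VE, val' v = sSup (val' '' succ v))
    (hA' : ∀ v ∈ VA, val' v = sInf (val' '' succ v))
    (hR' : ∀ v ∈ VR, val' v = (val' (r1 v) + val' (r2 v)) / 2) (v : V) :
    val v ≤ val' v := by
  choose σ hσmem hσval using fun v => ((hsucc v).image val).csSup_mem ((hfin v).image val)
  choose τ hτmem hτval using fun v => ((hsucc v).image val').csInf_mem ((hfin v).image val')
  have hEve : ∀ a ∈ VE, val a - val' a ≤ val (σ a) - val' (σ a) := fun a ha => by
    have : val' (σ a) ≤ val' a :=
      hE' a ha ▸ le_csSup ((hfin a).image val').bddAbove ⟨σ a, hσmem a, rfl⟩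
    linarith [hσval a, hE a ha]
  have hAdam : ∀ a ∈ VA, val a - val' a ≤ val (τ a) - val' (τ a) := fun a ha => by
    have : val a ≤ val (τ a) :=
      hA a ha ▸ csInf_le ((hfin a).image val).bddBelow ⟨τ a, hτmem a, rfl⟩
    linarith [hτval a, hA' a ha]
  have hRandom : ∀ a ∈ VR, val a - val' a =
      ((val (r1 a) - val' (r1 a)) + (val (r2 a) - val' (r2 a))) / 2 := fun a ha => by
    rw [hR a ha, hR' a ha]; ring
  exact sub_nonpos.1 <| ssg_le_zero_of_absorbing_le_zero (d := fun v => val v - val' v)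
    hEve hAdam hRandom (hstop σ τ (fun v _ => hσmem v) (fun v _ => hτmem v))
    (sub_nonpos.2 hwin) (sub_nonpos.2 hlose) v

theorem stmt_16_general {V : Type*} [Fintype V]
    (VE VA VR : Set V) (succ : V → Set V)
    (hsucc : ∀ v, (succ v).Nonempty) (hfin : ∀ v, (succ v).Finite)
    (r1 r2 : V → V) (vwin vlose : V)
    (hstop : ∀ σ τ : V → V, (∀ v ∈ VE, σ v ∈ succ v) → (∀ v ∈ VA, τ v ∈ succ v) →
      ∀ v : V, Relation.ReflTransGen (ssgStep VE VA VR σ τ r1 r2) v vwin ∨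
        Relation.ReflTransGen (ssgStep VE VA VR σ τ r1 r2) v vlose)
    (val val' : V → ℝ)
    (hwinv : val vwin = 1) (hlosev : val vlose = 0)
    (hwinv' : val' vwin = 1) (hlosev' : val' vlose = 0)
    (hE : ∀ v ∈ VE, val v = sSup (val '' succ v))
    (hA : ∀ v ∈ VA, val v = sInf (val '' succ v))
    (hR : ∀ v ∈ VR, val v = (val (r1 v) + val (r2 v)) / 2)
    (hE' : ∀ v ∈ VE, val' v = sSup (val' '' succ v))
    (hA' : ∀ v ∈ VA, val' v = sInf (val' '' succ v))
    (hR' : ∀ v ∈ VR, val' v = (val' (r1 v) + val' (r2 v)) / 2) :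
    val = val' :=
  funext fun v => le_antisymm
    (ssg_solution_le_of_absorbing_le VE VA VR succ hsucc hfin r1 r2 hstop val val'
      (hwinv.trans hwinv'.symm).le (hlosev.trans hlosev'.symm).le hE hA hR hE' hA' hR' v)
    (ssg_solution_le_of_absorbing_le VE VA VR succ hsucc hfin r1 r2 hstop val' val
      (hwinv'.trans hwinv.symm).le (hlosev'.trans hlosev.symm).le hE' hA' hR' hE hA hR v)

/-- Uniqueness of the solution in `[0,1]^V` of Condon's local optimality
equations for a stopping simple stochastic game whose random vertices have two
successors, each with probability one half. -/
theorem stmt_16 {V : Type*} [Fintype V]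
    (VE VA VR : Set V) (succ : V → Set V)
    (hsucc : ∀ v, (succ v).Nonempty) (hfin : ∀ v, (succ v).Finite)
    (hcover : ∀ v, v ∈ VE ∨ v ∈ VA ∨ v ∈ VR)
    (hEA : Disjoint VE VA) (hER : Disjoint VE VR) (hAR : Disjoint VA VR)
    (r1 r2 : V → V) (hr : ∀ v ∈ VR, succ v = {r1 v, r2 v})
    (vwin vlose : V) (hw : succ vwin = {vwin}) (hl : succ vlose = {vlose})
    (hstop : ∀ σ τ : V → V, (∀ v ∈ VE, σ v ∈ succ v) → (∀ v ∈ VA, τ v ∈ succ v) →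
      ∀ v : V, Relation.ReflTransGen (ssgStep VE VA VR σ τ r1 r2) v vwin ∨
        Relation.ReflTransGen (ssgStep VE VA VR σ τ r1 r2) v vlose)
    (val val' : V → ℝ)
    (hval01 : ∀ v, val v ∈ Set.Icc (0 : ℝ) 1)
    (hval01' : ∀ v, val' v ∈ Set.Icc (0 : ℝ) 1)
    (hwinv : val vwin = 1) (hlosev : val vlose = 0)
    (hwinv' : val' vwin = 1) (hlosev' : val' vlose = 0)
    (hE : ∀ v ∈ VE, val v = sSup (val '' succ v))
    (hA : ∀ v ∈ VA, val v = sInf (val '' succ v))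
    (hR : ∀ v ∈ VR, val v = (val (r1 v) + val (r2 v)) / 2)
    (hE' : ∀ v ∈ VE, val' v = sSup (val' '' succ v))
    (hA' : ∀ v ∈ VA, val' v = sInf (val' '' succ v))
    (hR' : ∀ v ∈ VR, val' v = (val' (r1 v) + val' (r2 v)) / 2) :
    val = val' :=
  stmt_16_general VE VA VR succ hsucc hfin r1 r2 vwin vlose hstop val val' hwinv hlosev hwinv'
    hlosev' hE hA hR hE' hA' hR'
end

section
/- In a simple stochastic game with n vertices where all random vertices have two successors each with probability 1/2, the value of every vertex is a rational number p/q with 0 ≤ p ≤ q ≤ 4^{n−1}. -/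
open Finset Matrix Equiv

namespace Matrix

variable {m : Type*} [Fintype m] [DecidableEq m]

theorem det_le_prod_sum_col {R S : Type*} [CommRing R] [Nontrivial R] [CommRing S]
    [LinearOrder S] [IsStrictOrderedRing S] (A : Matrix m m R) (abv : AbsoluteValue R S) :
    abv A.det ≤ ∏ j, ∑ i, abv (A i j) :=
  calc abv A.det = abv (∑ σ : Perm m, Perm.sign σ • ∏ i, A (σ i) i) := congr_arg abv (det_apply _)
    _ ≤ ∑ σ : Perm m, abv (Perm.sign σ • ∏ i, A (σ i) i) := abv.sum_le _ _
    _ = ∑ σ : Perm m, ∏ i, abv (A (σ i) i) :=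
      sum_congr rfl fun σ _ => by rw [abv.map_units_int_smul, abv.map_prod]
    _ = ∑ f ∈ univ.map ⟨_, DFunLike.coe_injective⟩, ∏ i, abv (A (f i) i) := by rw [sum_map]; rfl
    _ ≤ ∑ f : m → m, ∏ i, abv (A (f i) i) :=
      sum_le_univ_sum_of_nonneg fun _ => prod_nonneg fun _ _ => abv.nonneg _
    _ = ∏ j, ∑ i, abv (A i j) := (Fintype.prod_sum fun j i => abv (A i j)).symm

theorem det_le_prod_sum_row {R S : Type*} [CommRing R] [Nontrivial R] [CommRing S]
    [LinearOrder S] [IsStrictOrderedRing S] (A : Matrix m m R) (abv : AbsoluteValue R S) :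
    abv A.det ≤ ∏ i, ∑ j, abv (A i j) := by
  simpa using det_le_prod_sum_col Aᵀ abv

theorem map_det_smul_eq_of_mulVec_eq {R S : Type*} [CommRing R] [CommRing S] (f : R →+* S)
    {A : Matrix m m R} {b : m → R} {x : m → S} (h : A.map f *ᵥ x = f ∘ b) :
    f A.det • x = f ∘ (A.adjugate *ᵥ b) :=
  calc f A.det • x = ((A.map f).adjugate * A.map f) *ᵥ x := by
        rw [adjugate_mul, smul_mulVec, one_mulVec, RingHom.map_det]
        rfl
    _ = (A.map f).adjugate *ᵥ (f ∘ b) := by rw [← mulVec_mulVec, h]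
    _ = f ∘ (A.adjugate *ᵥ b) := by
        funext i
        rw [Function.comp_apply, RingHom.map_mulVec]
        exact congrFun (congrArg (· *ᵥ f ∘ b) (RingHom.map_adjugate f A).symm) i

end Matrix

theorem exists_eq_div_natAbs_of_intCast_eq_mul {x : ℝ} (hx : x ∈ Set.Icc 0 1) {d N : ℤ}
    (hd : d ≠ 0) (h : (N : ℝ) = d * x) : ∃ p : ℕ, p ≤ d.natAbs ∧ x = p / d.natAbs := by
  have hN : (N.natAbs : ℝ) = (d.natAbs : ℝ) * x := by
    rw [Nat.cast_natAbs, Nat.cast_natAbs, Int.cast_abs, Int.cast_abs, h, abs_mul,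
      abs_of_nonneg hx.1]
  refine ⟨N.natAbs, ?_, ?_⟩
  · have : (N.natAbs : ℝ) ≤ d.natAbs := hN ▸ mul_le_of_le_one_right (Nat.cast_nonneg _) hx.2
    exact_mod_cast this
  · have : (d.natAbs : ℝ) ≠ 0 := by exact_mod_cast Int.natAbs_ne_zero.2 hd
    rw [hN, mul_div_cancel_left₀ _ this]

theorem sum_abs_single {ι α : Type*} [Fintype ι] [DecidableEq ι] [AddCommGroup α] [LinearOrder α]
    [IsOrderedAddMonoid α] (i : ι) (c : α) : ∑ j, |(Pi.single i c : ι → α) j| = |c| := by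
  simp [Pi.single_apply, apply_ite]

section CondonMatrix

variable {V : Type*} [DecidableEq V] {T : Finset V} {f₁ f₂ : V → V}

/-- The matrix of the system `x t = b t` for `t ∈ T` and `2 x v - x (f₁ v) - x (f₂ v) = b v`
for `v ∉ T`. -/
def condonMatrix (R : Type*) [Ring R] (T : Finset V) (f₁ f₂ : V → V) : Matrix V V R :=
  Matrix.of fun v =>
    if v ∈ T then Pi.single v 1 else Pi.single v 2 - Pi.single (f₁ v) 1 - Pi.single (f₂ v) 1

theorem condonMatrix_mulVec [Fintype V] {R : Type*} [CommRing R] (x : V → R) (v : V) :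
    (condonMatrix R T f₁ f₂ *ᵥ x) v = if v ∈ T then x v else 2 * x v - x (f₁ v) - x (f₂ v) := by
  simp only [mulVec, condonMatrix, of_apply]
  split_ifs <;> simp [sub_dotProduct, single_dotProduct, ← Pi.sub_def]

theorem condonMatrix_map_intCast (R : Type*) [CommRing R] :
    (condonMatrix ℤ T f₁ f₂).map (Int.castRingHom R) = condonMatrix R T f₁ f₂ := by
  ext v w
  by_cases hv : v ∈ T <;> simp [condonMatrix, hv, Pi.single_apply]

theorem sum_abs_condonMatrix_of_mem [Fintype V] {v : V} (hv : v ∈ T) :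
    ∑ w, |condonMatrix ℤ T f₁ f₂ v w| = 1 := by
  simp only [condonMatrix, of_apply, if_pos hv, sum_abs_single, abs_one]

theorem sum_abs_condonMatrix_le [Fintype V] (v : V) : ∑ w, |condonMatrix ℤ T f₁ f₂ v w| ≤ 4 := by
  by_cases hv : v ∈ T
  · rw [sum_abs_condonMatrix_of_mem hv]; norm_num
  calc ∑ w, |condonMatrix ℤ T f₁ f₂ v w|
      ≤ ∑ w, (|(Pi.single v 2 : V → ℤ) w| + |(Pi.single (f₁ v) 1 : V → ℤ) w|
          + |(Pi.single (f₂ v) 1 : V → ℤ) w|) := by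
        refine sum_le_sum fun w _ => ?_
        simp only [condonMatrix, of_apply, hv, if_false, Pi.sub_apply]
        set a := (Pi.single v 2 : V → ℤ) w
        set b := (Pi.single (f₁ v) 1 : V → ℤ) w
        calc |a - b - _| ≤ |a - b| + |_| := abs_sub _ _
          _ ≤ |a| + |b| + |_| := by gcongr; exact abs_sub _ _
    _ = 4 := by simp only [sum_add_distrib, sum_abs_single]; norm_num

theorem abs_det_condonMatrix_le [Fintype V] {t : V} (ht : t ∈ T) :
    |(condonMatrix ℤ T f₁ f₂).det| ≤ 4 ^ (Fintype.card V - 1) := by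
  set A := condonMatrix ℤ T f₁ f₂
  calc |A.det| ≤ ∏ v, ∑ w, |A v w| := det_le_prod_sum_row A AbsoluteValue.abs
    _ = (∑ w, |A t w|) * ∏ v ∈ univ.erase t, ∑ w, |A v w| := (mul_prod_erase _ _ (mem_univ t)).symm
    _ ≤ 1 * ∏ _v ∈ univ.erase t, 4 := by
        rw [sum_abs_condonMatrix_of_mem ht]
        gcongr with v
        exact sum_abs_condonMatrix_le v
    _ = 4 ^ (Fintype.card V - 1) := by simp [card_erase_of_mem]

def condonStep (f₁ f₂ : V → V) (a b : V) : Prop := b = f₁ a ∨ b = f₂ a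

/-- Discrete maximum principle: a vector in the kernel attains its maximum on `T`. -/
theorem le_zero_of_condonMatrix_mulVec_eq_zero [Fintype V]
    (hreach : ∀ v, ∃ t ∈ T, Relation.ReflTransGen (condonStep f₁ f₂) v t)
    {x : V → ℝ} (hx : condonMatrix ℝ T f₁ f₂ *ᵥ x = 0) (v : V) : x v ≤ 0 := by
  have hrow a := congrFun hx a
  simp only [condonMatrix_mulVec, Pi.zero_apply] at hrow
  have : Nonempty V := ⟨v⟩
  obtain ⟨m, hm⟩ := Finite.exists_max x
  obtain ⟨t, ht, hmt⟩ := hreach m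
  suffices ∀ a, Relation.ReflTransGen (condonStep f₁ f₂) a t → x a = x m → x m ≤ 0 from
    (hm v).trans (this m hmt rfl)
  intro a hat
  induction hat using Relation.ReflTransGen.head_induction_on with
  | refl => intro h; exact (by simpa [ht, h] using hrow t : x m = 0).le
  | @head a b hab _ ih =>
    intro ha
    by_cases haT : a ∈ T
    · exact (by simpa [haT, ha] using hrow a : x m = 0).le
    have h2 := hrow a
    rw [if_neg haT] at h2
    rcases hab with rfl | rfl <;> exact ih (by linarith [hm (f₁ a), hm (f₂ a)])

theorem condonMatrix_mulVec_eq_zero [Fintype V]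
    (hreach : ∀ v, ∃ t ∈ T, Relation.ReflTransGen (condonStep f₁ f₂) v t)
    {x : V → ℝ} (hx : condonMatrix ℝ T f₁ f₂ *ᵥ x = 0) : x = 0 := by
  have hneg : condonMatrix ℝ T f₁ f₂ *ᵥ -x = 0 := by rw [mulVec_neg, hx, neg_zero]
  funext v
  exact le_antisymm (le_zero_of_condonMatrix_mulVec_eq_zero hreach hx v)
    (neg_nonpos.1 (le_zero_of_condonMatrix_mulVec_eq_zero hreach hneg v))

theorem det_condonMatrix_ne_zero [Fintype V]
    (hreach : ∀ v, ∃ t ∈ T, Relation.ReflTransGen (condonStep f₁ f₂) v t) :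
    (condonMatrix ℤ T f₁ f₂).det ≠ 0 := by
  have hR : (condonMatrix ℝ T f₁ f₂).det ≠ 0 := fun h => by
    obtain ⟨x, hx0, hx⟩ := exists_mulVec_eq_zero_iff.2 h
    exact hx0 (condonMatrix_mulVec_eq_zero hreach hx)
  rw [← condonMatrix_map_intCast, ← RingHom.mapMatrix_apply, ← RingHom.map_det] at hR
  exact fun h => hR (by rw [h, map_zero])

theorem condonMatrix_mulVec_eq_single [Fintype V] {x : V → ℝ} {t₁ t₀ : V}
    (h₁ : x t₁ = 1) (h₀ : x t₀ = 0) (hharm : ∀ v, 2 * x v = x (f₁ v) + x (f₂ v)) :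
    condonMatrix ℝ {t₁, t₀} f₁ f₂ *ᵥ x = Pi.single t₁ 1 := by
  have h₀₁ : t₀ ≠ t₁ := fun h => by simp [h, h₁] at h₀
  funext v
  rw [condonMatrix_mulVec]
  split_ifs with hv
  · rcases mem_insert.1 hv with rfl | hv
    · simp [h₁]
    · simp [mem_singleton.1 hv, h₀, h₀₁]
  · rw [Pi.single_eq_of_ne (ne_of_mem_of_not_mem (mem_insert_self _ _) hv).symm]
    linarith [hharm v]

end CondonMatrix

section Game

variable {V : Type*} {VE VA VR : Set V}

theorem exists_strategy_attaining (S : Set V) (succ : V → Set V) (val : V → ℝ) (pick : Set ℝ → ℝ)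
    (hpick : ∀ v ∈ S, pick (val '' succ v) ∈ val '' succ v) :
    ∃ σ : V → V, ∀ v ∈ S, σ v ∈ succ v ∧ val (σ v) = pick (val '' succ v) := by
  have : ∀ v, ∃ w, v ∈ S → w ∈ succ v ∧ val w = pick (val '' succ v) := fun v => by
    by_cases hv : v ∈ S
    · obtain ⟨w, hw, hw'⟩ := hpick v hv
      exact ⟨w, fun _ => ⟨hw, hw'⟩⟩
    · exact ⟨v, fun h => absurd h hv⟩
  choose σ hσ using this
  exact ⟨σ, hσ⟩

open Classical in
noncomputable def ssgSucc (VE VA : Set V) (σ τ r : V → V) (v : V) : V :=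
  if v ∈ VE then σ v else if v ∈ VA then τ v else r v

theorem ssgSucc_of_mem_left {σ τ r : V → V} {v : V} (hv : v ∈ VE) : ssgSucc VE VA σ τ r v = σ v :=
  if_pos hv

theorem ssgSucc_of_mem_right {σ τ r : V → V} {v : V} (hE : v ∉ VE) (hv : v ∈ VA) :
    ssgSucc VE VA σ τ r v = τ v := by
  rw [ssgSucc, if_neg hE, if_pos hv]

theorem ssgSucc_of_not_mem {σ τ r : V → V} {v : V} (hE : v ∉ VE) (hA : v ∉ VA) :
    ssgSucc VE VA σ τ r v = r v := by
  rw [ssgSucc, if_neg hE, if_neg hA]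

variable {σ τ r1 r2 : V → V}

theorem ssgStep_le_condonStep (hEA : Disjoint VE VA) (hER : Disjoint VE VR) (hAR : Disjoint VA VR) :
    ssgStep VE VA VR σ τ r1 r2 ≤ condonStep (ssgSucc VE VA σ τ r1) (ssgSucc VE VA σ τ r2) := by
  rintro a b (⟨ha, rfl⟩ | ⟨ha, rfl⟩ | ⟨ha, rfl | rfl⟩)
  · exact Or.inl (ssgSucc_of_mem_left ha).symm
  · exact Or.inl (ssgSucc_of_mem_right (hEA.notMem_of_mem_right ha) ha).symm
  · exact Or.inl (ssgSucc_of_not_mem (hER.notMem_of_mem_right ha) (hAR.notMem_of_mem_right ha)).symm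
  · exact Or.inr (ssgSucc_of_not_mem (hER.notMem_of_mem_right ha) (hAR.notMem_of_mem_right ha)).symm

theorem two_mul_eq_add_ssgSucc (hcover : ∀ v, v ∈ VE ∨ v ∈ VA ∨ v ∈ VR)
    (hEA : Disjoint VE VA) (hER : Disjoint VE VR) (hAR : Disjoint VA VR) {val : V → ℝ}
    (hσ : ∀ v ∈ VE, val (σ v) = val v) (hτ : ∀ v ∈ VA, val (τ v) = val v)
    (hR : ∀ v ∈ VR, val v = (val (r1 v) + val (r2 v)) / 2) (v : V) :
    2 * val v = val (ssgSucc VE VA σ τ r1 v) + val (ssgSucc VE VA σ τ r2 v) := by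
  rcases hcover v with hv | hv | hv
  · rw [ssgSucc_of_mem_left hv, ssgSucc_of_mem_left hv, hσ v hv]; ring
  · rw [ssgSucc_of_mem_right (hEA.notMem_of_mem_right hv) hv,
      ssgSucc_of_mem_right (hEA.notMem_of_mem_right hv) hv, hτ v hv]; ring
  · rw [ssgSucc_of_not_mem (hER.notMem_of_mem_right hv) (hAR.notMem_of_mem_right hv),
      ssgSucc_of_not_mem (hER.notMem_of_mem_right hv) (hAR.notMem_of_mem_right hv), hR v hv]; ring

end Game

theorem stmt_17_general {V : Type*} [Fintype V]
    (VE VA VR : Set V) (succ : V → Set V)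
    (hsucc : ∀ v, (succ v).Nonempty) (hfin : ∀ v, (succ v).Finite)
    (hcover : ∀ v, v ∈ VE ∨ v ∈ VA ∨ v ∈ VR)
    (hEA : Disjoint VE VA) (hER : Disjoint VE VR) (hAR : Disjoint VA VR)
    (r1 r2 : V → V)
    (vwin vlose : V)
    (hstop : ∀ σ τ : V → V, (∀ v ∈ VE, σ v ∈ succ v) → (∀ v ∈ VA, τ v ∈ succ v) →
      ∀ v : V, Relation.ReflTransGen (ssgStep VE VA VR σ τ r1 r2) v vwin ∨
        Relation.ReflTransGen (ssgStep VE VA VR σ τ r1 r2) v vlose)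
    (val : V → ℝ)
    (hval01 : ∀ v, val v ∈ Set.Icc (0 : ℝ) 1)
    (hwinv : val vwin = 1) (hlosev : val vlose = 0)
    (hE : ∀ v ∈ VE, val v = sSup (val '' succ v))
    (hA : ∀ v ∈ VA, val v = sInf (val '' succ v))
    (hR : ∀ v ∈ VR, val v = (val (r1 v) + val (r2 v)) / 2) :
    ∀ v : V, ∃ p q : ℕ, 0 < q ∧ p ≤ q ∧ q ≤ 4 ^ (Fintype.card V - 1) ∧
      val v = (p : ℝ) / (q : ℝ) := by
  classical
  obtain ⟨σ, hσ⟩ := exists_strategy_attaining VE succ val sSup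
    fun v _ => ((hsucc v).image val).csSup_mem ((hfin v).image val)
  obtain ⟨τ, hτ⟩ := exists_strategy_attaining VA succ val sInf
    fun v _ => ((hsucc v).image val).csInf_mem ((hfin v).image val)
  set f₁ := ssgSucc VE VA σ τ r1
  set f₂ := ssgSucc VE VA σ τ r2
  set A := condonMatrix ℤ {vwin, vlose} f₁ f₂
  have hreach : ∀ v, ∃ t ∈ ({vwin, vlose} : Finset V),
      Relation.ReflTransGen (condonStep f₁ f₂) v t := by
    have hmono := Relation.ReflTransGen.mono
      (ssgStep_le_condonStep (σ := σ) (τ := τ) (r1 := r1) (r2 := r2) hEA hER hAR)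
    intro v
    rcases hstop σ τ (fun v hv => (hσ v hv).1) (fun v hv => (hτ v hv).1) v with h | h
    exacts [⟨vwin, by simp, hmono _ _ h⟩, ⟨vlose, by simp, hmono _ _ h⟩]
  have hsys : A.map (Int.castRingHom ℝ) *ᵥ val = Int.castRingHom ℝ ∘ Pi.single vwin 1 := by
    rw [condonMatrix_map_intCast, condonMatrix_mulVec_eq_single hwinv hlosev
      (two_mul_eq_add_ssgSucc hcover hEA hER hAR (fun v hv => (hσ v hv).2.trans (hE v hv).symm)
        (fun v hv => (hτ v hv).2.trans (hA v hv).symm) hR)]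
    funext v
    simp [Pi.single_apply]
  have hdet := det_condonMatrix_ne_zero hreach
  intro v
  obtain ⟨p, hp, hv⟩ := exists_eq_div_natAbs_of_intCast_eq_mul (hval01 v) hdet
    (by simpa using (congrFun (map_det_smul_eq_of_mulVec_eq _ hsys) v).symm)
  refine ⟨p, A.det.natAbs, Int.natAbs_pos.2 hdet, hp, ?_, hv⟩
  zify
  exact abs_det_condonMatrix_le (mem_insert_self vwin {vlose})

/-- In a stopping simple stochastic game with `n` vertices where all random
vertices have two successors each with probability one half, the value of every
vertex (the unique solution of Condon's local optimality equations) is a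
rational `p / q` with `0 ≤ p ≤ q ≤ 4^(n-1)`. -/
theorem stmt_17 {V : Type*} [Fintype V]
    (VE VA VR : Set V) (succ : V → Set V)
    (hsucc : ∀ v, (succ v).Nonempty) (hfin : ∀ v, (succ v).Finite)
    (hcover : ∀ v, v ∈ VE ∨ v ∈ VA ∨ v ∈ VR)
    (hEA : Disjoint VE VA) (hER : Disjoint VE VR) (hAR : Disjoint VA VR)
    (r1 r2 : V → V) (hr : ∀ v ∈ VR, succ v = {r1 v, r2 v})
    (vwin vlose : V) (hw : succ vwin = {vwin}) (hl : succ vlose = {vlose})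
    (hstop : ∀ σ τ : V → V, (∀ v ∈ VE, σ v ∈ succ v) → (∀ v ∈ VA, τ v ∈ succ v) →
      ∀ v : V, Relation.ReflTransGen (ssgStep VE VA VR σ τ r1 r2) v vwin ∨
        Relation.ReflTransGen (ssgStep VE VA VR σ τ r1 r2) v vlose)
    (val : V → ℝ)
    (hval01 : ∀ v, val v ∈ Set.Icc (0 : ℝ) 1)
    (hwinv : val vwin = 1) (hlosev : val vlose = 0)
    (hE : ∀ v ∈ VE, val v = sSup (val '' succ v))
    (hA : ∀ v ∈ VA, val v = sInf (val '' succ v))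
    (hR : ∀ v ∈ VR, val v = (val (r1 v) + val (r2 v)) / 2) :
    ∀ v : V, ∃ p q : ℕ, 0 < q ∧ p ≤ q ∧ q ≤ 4 ^ (Fintype.card V - 1) ∧
      val v = (p : ℝ) / (q : ℝ) :=
  stmt_17_general VE VA VR succ hsucc hfin hcover hEA hER hAR r1 r2 vwin vlose hstop val hval01
    hwinv hlosev hE hA hR
end
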